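/- arXiv:2412.10336 — 4 statements merged into one kernel-verified Lean document; each statement's English description precedes it below -/
import Mathlib

section
/- Let d be a natural number and let A be an additive subgroup of the group ℚ^d. Then for every integer m ≥ 1, the quotient group A/mA is finite and has cardinality at most m^d. -/
/-- If `A` is an additive subgroup of `ℚ^d`, then for every integer `m ≥ 1`
the quotient `A / mA` is finite of cardinality at most `m ^ d`, where
`mA = {m • a : a ∈ A}`. -/
theorem subgroup_of_rat_pow_quotient_card_le (d : ℕ) (A : AddSubgroup (Fin d → ℚ))
    (m : ℕ) (hm : 1 ≤ m) :
    Finite (A ⧸ AddMonoidHom.range (m • AddMonoidHom.id A)) ∧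
    Nat.card (A ⧸ AddMonoidHom.range (m • AddMonoidHom.id A)) ≤ m ^ d := by
  classical
  haveI : NeZero m := ⟨by omega⟩
  set M := AddMonoidHom.range (m • AddMonoidHom.id A) with hM
  have key : ∀ s : Finset (A ⧸ M), s.card ≤ m ^ d := by
    intro s
    -- lift quotient elements to A
    have hsurj : Function.Surjective (QuotientAddGroup.mk : A → A ⧸ M) :=
      QuotientAddGroup.mk_surjective
    choose f hf using hsurj
    set T : Set (Fin d → ℚ) := (fun a : A => (a : Fin d → ℚ)) '' (s.image f : Finset A) with hT
    have hTfin : T.Finite := (s.image f).finite_toSet.image _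
    have hTA : T ⊆ (A : Set (Fin d → ℚ)) := by
      rintro x ⟨a, -, rfl⟩; exact a.2
    set F : Submodule ℤ (Fin d → ℚ) := Submodule.span ℤ T with hF
    have hFA : (F : Set (Fin d → ℚ)) ⊆ (A : Set (Fin d → ℚ)) := by
      have : F ≤ AddSubgroup.toIntSubmodule A := Submodule.span_le.mpr hTA
      exact this
    haveI : Module.Finite ℤ F := Module.Finite.span_of_finite ℤ hTfin
    haveI : Module.Free ℤ F := Module.free_of_finite_type_torsion_free'
    set ι := Module.Free.ChooseBasisIndex ℤ F with hι
    set b : Module.Basis ι ℤ F := Module.Free.chooseBasis ℤ F with hb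
    have hcard : Fintype.card ι ≤ d := by
      have hli : LinearIndependent ℤ (fun i => ((b i : F) : Fin d → ℚ)) :=
        b.linearIndependent.map' F.subtype (Submodule.ker_subtype F)
      rw [LinearIndependent.iff_fractionRing ℤ ℚ] at hli
      simpa [Module.finrank_fin_fun] using hli.fintype_card_le_finrank
    set e : (ι → ℤ) ≃ₗ[ℤ] F := b.equivFun.symm with he
    -- the additive hom from ι → ℤ into the quotient
    set g : (ι → ℤ) →+ A ⧸ M := AddMonoidHom.mk'
      (fun x => QuotientAddGroup.mk (⟨((e x : F) : Fin d → ℚ), hFA (e x).2⟩ : A))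
      (by
        intro x y
        have : (⟨((e (x + y) : F) : Fin d → ℚ), hFA (e (x + y)).2⟩ : A) =
            ⟨((e x : F) : Fin d → ℚ), hFA (e x).2⟩ + ⟨((e y : F) : Fin d → ℚ), hFA (e y).2⟩ := by
          ext
          simp [map_add]
        rw [this, QuotientAddGroup.mk_add]) with hg
    -- g factors through ι → ZMod m
    have hfac : ∀ x y : (ι → ℤ), (∀ i, ((x i : ZMod m)) = (y i : ZMod m)) → g x = g y := by
      intro x y hxy
      have hdvd : ∀ i, (m : ℤ) ∣ (x i - y i) := by
        intro i
        rw [← ZMod.intCast_zmod_eq_zero_iff_dvd]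
        push_cast
        simp [hxy i]
      choose z hz using hdvd
      have hxz : x - y = m • z := by
        funext i
        simpa [mul_comm] using hz i
      have h0 : g (x - y) = 0 := by
        rw [hxz, map_nsmul]
        set a : A := ⟨((e z : F) : Fin d → ℚ), hFA (e z).2⟩ with ha
        have hga : g z = QuotientAddGroup.mk' M a := rfl
        rw [hga, ← map_nsmul (QuotientAddGroup.mk' M) m a]
        rw [QuotientAddGroup.mk'_apply, QuotientAddGroup.eq_zero_iff]
        exact ⟨a, by simp⟩
      have h2 := map_sub g x y
      rw [h0] at h2
      exact sub_eq_zero.mp h2.symm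
    set h : (ι → ZMod m) → A ⧸ M := fun w => g (fun i => ((w i).val : ℤ)) with hh
    have hgh : ∀ x : (ι → ℤ), g x = h (fun i => (x i : ZMod m)) := by
      intro x
      apply hfac
      intro i
      push_cast
      exact (ZMod.natCast_rightInverse _).symm
    -- every element of s is in the range of h
    have hsr : (s : Set (A ⧸ M)) ⊆ Set.range h := by
      intro q hq
      have hfq : ((f q : Fin d → ℚ)) ∈ F := Submodule.subset_span ⟨f q, by
        simpa using Finset.mem_image_of_mem f hq, rfl⟩
      obtain ⟨x, hx⟩ := e.surjective ⟨f q, hfq⟩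
      refine ⟨fun i => (x i : ZMod m), ?_⟩
      rw [← hgh x, hg]
      simp only [AddMonoidHom.mk'_apply]
      have hcoe : ((e x : F) : Fin d → ℚ) = (f q : Fin d → ℚ) := by rw [hx]
      have heq : (⟨((e x : F) : Fin d → ℚ), hFA (e x).2⟩ : A) = f q := Subtype.ext hcoe
      rw [heq]
      exact hf q
    -- count
    have h1 : s.card ≤ Nat.card (ι → ZMod m) := by
      have : (s : Set (A ⧸ M)).ncard ≤ (Set.range h).ncard := by
        exact Set.ncard_le_ncard hsr (Set.finite_range h)
      rw [Set.ncard_coe_finset] at this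
      refine this.trans ?_
      rw [← Set.image_univ]
      calc (h '' Set.univ).ncard ≤ Set.univ.ncard := Set.ncard_image_le Set.finite_univ
        _ = Nat.card (ι → ZMod m) := Set.ncard_univ _
    rw [Nat.card_fun, Nat.card_zmod, Nat.card_eq_fintype_card] at h1
    exact h1.trans (Nat.pow_le_pow_right (by omega) hcard)
  have hfin : Finite (A ⧸ M) := by
    by_contra hinf
    rw [not_finite_iff_infinite] at hinf
    obtain ⟨s, hs⟩ := Finset.exists_card_eq (α := A ⧸ M) (m ^ d + 1)
    have := key s
    omega
  refine ⟨hfin, ?_⟩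
  haveI : Fintype (A ⧸ M) := Fintype.ofFinite _
  rw [Nat.card_eq_fintype_card, ← Finset.card_univ]
  exact key Finset.univ
end

section
/- Let G be an archimedean, densely ordered, linearly ordered abelian group with small quotients. Then for every integer m ≥ 1 and all a, b, g ∈ G with a < b, the set {x ∈ G : a < x < b and x - g ∈ mG} is infinite (in particular nonempty). -/
/-- An abelian group has small quotients if for every `n ≥ 1` the subgroup
`nG = {n • g : g ∈ G}` has finite index in `G`. -/
def SmallQuotients (G : Type*) [AddCommGroup G] : Prop :=
  ∀ n : ℕ, 1 ≤ n → (AddMonoidHom.range (n • AddMonoidHom.id G)).FiniteIndex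

/-
Choose `y > 0` with `m • y < b - a`. By the archimedean property the translates of `g` by
multiples of `m • y` form a progression with step smaller than `b - a`, so one of them lies in
`(a, b)`. Hence every interval meets the coset `g + mG`; applied to `(a, x)` this shows that the
intersection with `(a, b)` has no least element, so it is infinite.
-/

theorem Set.infinite_of_nonempty_of_forall_exists_lt {α : Type*} [Preorder α] {s : Set α}
    (hs : s.Nonempty) (h : ∀ x ∈ s, ∃ y ∈ s, y < x) : s.Infinite :=
  have : Nonempty s := hs.to_subtype
  have : NoMinOrder s := ⟨fun ⟨x, hx⟩ ↦
    let ⟨y, hy, hyx⟩ := h x hx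
    ⟨⟨y, hy⟩, hyx⟩⟩
  Set.infinite_coe_iff.mp inferInstance

theorem exists_mem_Ioo_sub_eq_nsmul {G : Type*} [AddCommGroup G] [LinearOrder G]
    [IsOrderedAddMonoid G] [Archimedean G] [DenselyOrdered G] {m : ℕ} (hm : m ≠ 0) (g : G)
    {a b : G} (hab : a < b) : ∃ x ∈ Set.Ioo a b, ∃ y : G, x - g = m • y := by
  obtain ⟨y, hy, hmy⟩ := exists_nsmul_lt_of_pos (sub_pos.mpr hab) m
  obtain ⟨k, ⟨hak, hkb⟩, -⟩ := existsUnique_add_zsmul_mem_Ioc (nsmul_pos hy hm) g a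
  refine ⟨g + k • m • y, ⟨hak, ?_⟩, k • y, ?_⟩
  · calc g + k • m • y ≤ a + m • y := hkb
      _ < a + (b - a) := by gcongr
      _ = b := add_sub_cancel a b
  · rw [add_sub_cancel_left, smul_comm]

theorem interval_inter_coset_infinite_general (G : Type*) [AddCommGroup G] [LinearOrder G]
    [IsOrderedAddMonoid G]
    [Archimedean G] [DenselyOrdered G]
    (m : ℕ) (hm : 1 ≤ m) (a b g : G) (hab : a < b) :
    {x : G | a < x ∧ x < b ∧ ∃ y : G, x - g = m • y}.Infinite := by
  have hm0 : m ≠ 0 := Nat.one_le_iff_ne_zero.mp hm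
  apply Set.infinite_of_nonempty_of_forall_exists_lt
  · obtain ⟨x, ⟨hax, hxb⟩, hx⟩ := exists_mem_Ioo_sub_eq_nsmul hm0 g hab
    exact ⟨x, hax, hxb, hx⟩
  · rintro x ⟨hax, hxb, -⟩
    obtain ⟨y, ⟨hay, hyx⟩, hy⟩ := exists_mem_Ioo_sub_eq_nsmul hm0 g hax
    exact ⟨y, ⟨hay, hyx.trans hxb, hy⟩, hyx⟩

/-- In an archimedean, densely ordered, linearly ordered abelian group with
small quotients, for every integer `m ≥ 1` and all `a < b` and `g`, the intersection of the
interval `(a, b)` with the coset `g + mG` is infinite. -/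
theorem interval_inter_coset_infinite (G : Type*) [AddCommGroup G] [LinearOrder G]
    [IsOrderedAddMonoid G]
    [Archimedean G] [DenselyOrdered G] (hsq : SmallQuotients G)
    (m : ℕ) (hm : 1 ≤ m) (a b g : G) (hab : a < b) :
    {x : G | a < x ∧ x < b ∧ ∃ y : G, x - g = m • y}.Infinite :=
  interval_inter_coset_infinite_general G m hm a b g hab
end

section
/- Let G be a linearly ordered abelian group that is elementarily equivalent, as an L_og-structure, to some archimedean ordered abelian group with small quotients. Let m, n, k ≥ 1 be integers, let g ∈ G, and let a, b ∈ G ∪ {-∞, +∞}. If the set {x ∈ G : a < n•x and k•x < b} (where an inequality is dropped when the corresponding endpoint is -∞ or +∞) is infinite, then the set {x ∈ G : a < n•x, k•x < b, and x - g ∈ mG} is infinite. -/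
open FirstOrder Set

/-- Function symbols of the language of abelian groups: `0`, `-`, `+`. -/
inductive grpFunc : ℕ → Type
  | zero : grpFunc 0
  | neg : grpFunc 1
  | add : grpFunc 2

/-- Relation symbols of the language of ordered abelian groups: `<`. -/
inductive ogRel : ℕ → Type
  | lt : ogRel 2

/-- The first-order language `L_grp = {+, -, 0}` of abelian groups. -/
def Lgrp : FirstOrder.Language := ⟨grpFunc, fun _ => Empty⟩

/-- The first-order language `L_og = {+, -, 0, <}` of ordered abelian groups. -/
def Log : FirstOrder.Language := ⟨grpFunc, ogRel⟩

/-- The natural `L_grp`-structure on an abelian group. -/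
instance grpStructure (G : Type*) [AddCommGroup G] : Lgrp.Structure G where
  funMap {_} f v :=
    match f with
    | .zero => 0
    | .neg => -v 0
    | .add => v 0 + v 1
  RelMap {_} r _ := r.elim

/-- The natural `L_og`-structure on an ordered abelian group. -/
instance ogStructure (G : Type*) [AddCommGroup G] [LT G] : Log.Structure G where
  funMap {_} f v :=
    match f with
    | .zero => 0
    | .neg => -v 0
    | .add => v 0 + v 1
  RelMap {_} r v :=
    match r with
    | .lt => v 0 < v 1

/-!
In an archimedean group `H`, every half-open interval `[u, u + m • y)` with `y > 0` meets every
coset of `mH` (reduce modulo `m • y`), and small quotients give finitely many such cosets. Both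
facts are first-order, so they transfer to `G`. A generalized interval `S` is convex; if it met
`g + mG` in a finite set `T` only, infinitely many points of `S \ T` would lie in one gap of `T`,
two of them `p < q` in the same coset of `mG`, and `[p, q] ⊆ S` would contain a point of `g + mG`
outside `T`.
-/

open FirstOrder.Language

namespace Set

variable {α β : Type*} [LinearOrder α] [Finite β]

theorem Infinite.exists_lt_map_eq_forall_notMem_Icc {S T : Set α} (hS : S.Infinite)
    (hT : T.Finite) (c : α → β) :
    ∃ p ∈ S, ∃ q ∈ S, p < q ∧ c p = c q ∧ ∀ t ∈ T, t ∉ Icc p q := by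
  have := hT.to_subtype
  let below (s : α) : Set T := {t | (t : α) < s}
  have gap : ∀ p ∈ S \ T, ∀ q ∈ S \ T, below p = below q → ∀ t ∈ T, t ∉ Icc p q := by
    rintro p hp q hq hpq t ht ⟨hpt, htq⟩
    have htq' : t < q := htq.lt_of_ne fun h => hq.2 (h ▸ ht)
    have htp : t < p := by
      change (⟨t, ht⟩ : T) ∈ below p
      exact hpq ▸ htq'
    exact (htp.trans_le hpt).false
  obtain ⟨p, hp, q, hq, hne, hpq⟩ := (hS.sdiff hT).exists_ne_map_eq_of_mapsTo
    (f := fun s => (below s, c s)) (mapsTo_univ _ _) finite_univ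
  simp only [Prod.mk.injEq] at hpq
  rcases hne.lt_or_gt with hlt | hlt
  · exact ⟨p, hp.1, q, hq.1, hlt, hpq.2, gap p hp q hq hpq.1⟩
  · exact ⟨q, hq.1, p, hp.1, hlt, hpq.2.symm, gap q hq p hp hpq.1.symm⟩

theorem Infinite.infinite_sep_of_ordConnected {S : Set α} (hS : S.Infinite) (hconv : S.OrdConnected)
    {P : α → Prop} (c : α → β)
    (hP : ∀ p ∈ S, ∀ q ∈ S, p < q → c p = c q → ∃ z ∈ Icc p q, P z) :
    {x ∈ S | P x}.Infinite := by
  intro hfin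
  obtain ⟨p, hp, q, hq, hpq, hc, hT⟩ := hS.exists_lt_map_eq_forall_notMem_Icc hfin c
  obtain ⟨z, hz, hPz⟩ := hP p hp q hq hpq hc
  exact hT z ⟨hconv.out hp hq hz, hPz⟩ hz

end Set

namespace Log

variable {α : Type*}

def zeroTerm : Log.Term α := Term.func grpFunc.zero ![]

def addTerm (t u : Log.Term α) : Log.Term α := Term.func grpFunc.add ![t, u]

def nsmulTerm : ℕ → Log.Term α → Log.Term α
  | 0, _ => zeroTerm
  | j + 1, t => addTerm (nsmulTerm j t) t

def ltFormula (t u : Log.Term α) : Log.Formula α := Relations.formula ogRel.lt ![t, u]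

/-- `∃ y, t = s + m • y`, i.e. `t ∈ s + mM`. -/
noncomputable def cosetFormula (m : ℕ) (t s : Log.Term α) : Log.Formula α :=
  Formula.iExs Unit <| Term.equal (t.relabel Sum.inl)
    (addTerm (s.relabel Sum.inl) (nsmulTerm m (Term.var (Sum.inr ()))))

/-- `∀ g u v, u < v ∧ v ∈ u + mM → ∃ z, ¬ z < u ∧ z < v ∧ z ∈ g + mM`. -/
noncomputable def cosetDenseSentence (m : ℕ) : Log.Sentence :=
  Formula.iAlls (Fin 3) <|
    (ltFormula (Term.var (Sum.inr 1)) (Term.var (Sum.inr 2)) ⊓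
        cosetFormula m (Term.var (Sum.inr 2)) (Term.var (Sum.inr 1))) ⟹
      Formula.iExs Unit
        (∼(ltFormula (Term.var (Sum.inr ())) (Term.var (Sum.inl (Sum.inr 1)))) ⊓
          ltFormula (Term.var (Sum.inr ())) (Term.var (Sum.inl (Sum.inr 2))) ⊓
          cosetFormula m (Term.var (Sum.inr ())) (Term.var (Sum.inl (Sum.inr 0))))

/-- `∃ g₀ … g_{d-1}, ∀ x, ⋁ i, x ∈ gᵢ + mM`. -/
noncomputable def finiteCosetsSentence (m d : ℕ) : Log.Sentence :=
  Formula.iExs (Fin d) <| Formula.iAlls Unit <| Formula.iSup fun i : Fin d =>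
    cosetFormula m (Term.var (Sum.inr ())) (Term.var (Sum.inl (Sum.inr i)))

section Realize

variable {M : Type*} [AddCommGroup M] [LT M] (v : α → M)

@[simp] lemma realize_zeroTerm : (zeroTerm : Log.Term α).realize v = 0 := rfl

@[simp] lemma realize_addTerm (t u : Log.Term α) :
    (addTerm t u).realize v = t.realize v + u.realize v := rfl

@[simp] lemma realize_nsmulTerm (j : ℕ) (t : Log.Term α) :
    (nsmulTerm j t).realize v = j • t.realize v := by
  induction j with
  | zero => simp [nsmulTerm]
  | succ j ih => simp only [nsmulTerm, realize_addTerm, ih, succ_nsmul]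

@[simp] lemma realize_ltFormula (t u : Log.Term α) :
    (ltFormula t u).Realize v ↔ t.realize v < u.realize v :=
  Formula.realize_rel

@[simp] lemma realize_cosetFormula (m : ℕ) (t s : Log.Term α) :
    (cosetFormula m t s).Realize v ↔ ∃ y : M, t.realize v = s.realize v + m • y := by
  simp only [cosetFormula, Formula.realize_iExs, Formula.realize_equal, Term.realize_relabel,
    realize_addTerm, realize_nsmulTerm, Term.realize_var]
  exact ⟨fun ⟨i, h⟩ => ⟨i (), h⟩, fun ⟨y, h⟩ => ⟨fun _ => y, h⟩⟩

lemma realize_finiteCosetsSentence {m d : ℕ} :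
    M ⊨ finiteCosetsSentence m d ↔
      ∃ gs : Fin d → M, ∀ x : M, ∃ i, ∃ y : M, x = gs i + m • y := by
  simp only [finiteCosetsSentence, Sentence.Realize, Formula.realize_iExs, Formula.realize_iAlls,
    Formula.realize_iSup, realize_cosetFormula, Term.realize_var, Sum.elim_inr]
  exact ⟨fun ⟨gs, h⟩ => ⟨gs, fun x => h fun _ => x⟩, fun ⟨gs, h⟩ => ⟨gs, fun x => h (x ())⟩⟩

end Realize

lemma realize_cosetDenseSentence {M : Type*} [AddCommGroup M] [LinearOrder M] {m : ℕ} :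
    M ⊨ cosetDenseSentence m ↔ ∀ g u v : M, u < v → (∃ y : M, v = u + m • y) →
      ∃ z ∈ Ico u v, ∃ y : M, z = g + m • y := by
  simp only [cosetDenseSentence, Sentence.Realize, Formula.realize_iAlls, Formula.realize_imp,
    Formula.realize_inf, Formula.realize_not, realize_ltFormula, realize_cosetFormula,
    Formula.realize_iExs, Term.realize_var, Sum.elim_inr, Sum.elim_inl, not_lt, mem_Ico]
  constructor
  · intro h g u v huv hvu
    obtain ⟨z, ⟨hu, hv⟩, hg⟩ := h ![g, u, v] ⟨huv, hvu⟩
    exact ⟨z (), ⟨hu, hv⟩, hg⟩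
  · intro h w ⟨huv, hvu⟩
    obtain ⟨z, hz, hg⟩ := h (w 0) (w 1) (w 2) huv hvu
    exact ⟨fun _ => z, hz, hg⟩

lemma archimedean_realize_cosetDenseSentence (H : Type*) [AddCommGroup H] [LinearOrder H]
    [IsOrderedAddMonoid H] [Archimedean H] (m : ℕ) : H ⊨ cosetDenseSentence m := by
  rw [realize_cosetDenseSentence]
  rintro g u v huv ⟨y, rfl⟩
  have hy : 0 < m • y := by simpa only [add_sub_cancel_left] using sub_pos.2 huv
  obtain ⟨s, hs, -⟩ := existsUnique_sub_zsmul_mem_Ico hy g u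
  refine ⟨g - s • m • y, hs, -(s • y), ?_⟩
  rw [smul_neg, smul_comm, sub_eq_add_neg]

lemma exists_realize_finiteCosetsSentence (H : Type*) [AddCommGroup H] [LT H] (m : ℕ)
    [Finite (H ⧸ (m • AddMonoidHom.id H).range)] : ∃ d, H ⊨ finiteCosetsSentence m d := by
  obtain ⟨d, ⟨e⟩⟩ := Finite.exists_equiv_fin (H ⧸ (m • AddMonoidHom.id H).range)
  refine ⟨d, realize_finiteCosetsSentence.2 ⟨fun i => (e.symm i).out, fun x => ?_⟩⟩
  obtain ⟨⟨_, hmy⟩, hy⟩ := QuotientAddGroup.mk_out_eq_add (m • AddMonoidHom.id H).range x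
  obtain ⟨y, rfl⟩ := hmy
  refine ⟨e x, -y, ?_⟩
  simp only [Equiv.symm_apply_apply, hy, AddMonoidHom.smul_apply, AddMonoidHom.id_apply, smul_neg,
    add_neg_cancel_right]

end Log

lemma ordConnected_genInterval {G : Type*} [AddCommGroup G] [LinearOrder G]
    [IsOrderedAddMonoid G] (n k : ℕ) (a b : Option G) :
    {x : G | (∀ a' ∈ a, a' < n • x) ∧ ∀ b' ∈ b, k • x < b'}.OrdConnected :=
  ⟨fun _ hx _ hy _ ⟨hxz, hzy⟩ =>
    ⟨fun a' ha' => (hx.1 a' ha').trans_le (nsmul_le_nsmul_right hxz n),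
      fun b' hb' => (nsmul_le_nsmul_right hzy k).trans_lt (hy.2 b' hb')⟩⟩

theorem genInterval_inter_coset_infinite_general (G : Type*) [AddCommGroup G] [LinearOrder G] [IsOrderedAddMonoid G]
    (H : Type*) [AddCommGroup H] [LinearOrder H] [IsOrderedAddMonoid H] [Archimedean H] (hH : SmallQuotients H)
    (heq : Log.ElementarilyEquivalent G H)
    (m n k : ℕ) (hm : 1 ≤ m)
    (g : G) (a b : Option G)
    (hinf : {x : G | (∀ a' ∈ a, a' < n • x) ∧ ∀ b' ∈ b, k • x < b'}.Infinite) :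
    {x : G | ((∀ a' ∈ a, a' < n • x) ∧ ∀ b' ∈ b, k • x < b') ∧
      ∃ y : G, x - g = m • y}.Infinite := by
  have := hH m hm
  obtain ⟨d, hd⟩ := Log.exists_realize_finiteCosetsSentence H m
  obtain ⟨gs, hgs⟩ := Log.realize_finiteCosetsSentence.1 ((heq.realize_sentence _).2 hd)
  have hdense := Log.realize_cosetDenseSentence.1
    ((heq.realize_sentence _).2 (Log.archimedean_realize_cosetDenseSentence H m))
  choose c y hc using hgs
  refine hinf.infinite_sep_of_ordConnected (ordConnected_genInterval n k a b) c
    fun p _ q _ hpq hcpq => ?_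
  have hqp : ∃ w, q = p + m • w := ⟨y q - y p, by
    rw [smul_sub, ← sub_eq_of_eq_add' (hc p), ← sub_eq_of_eq_add' (hc q), hcpq]; abel⟩
  obtain ⟨z, hz, w, rfl⟩ := hdense g p q hpq hqp
  exact ⟨_, Ico_subset_Icc_self hz, w, add_sub_cancel_left g _⟩

/-- Let `G` be a linearly ordered abelian group elementarily equivalent (as an
`L_og`-structure) to some archimedean ordered abelian group with small quotients. For integers
`m, n, k ≥ 1`, `g ∈ G`, and endpoints `a, b ∈ G ∪ {-∞, +∞}` (an endpoint being `none` means the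
corresponding inequality is dropped), if the generalized interval
`{x : a < n•x and k•x < b}` is infinite, then its intersection with the coset `g + mG`
is infinite. -/
theorem genInterval_inter_coset_infinite (G : Type*) [AddCommGroup G] [LinearOrder G] [IsOrderedAddMonoid G]
    (H : Type*) [AddCommGroup H] [LinearOrder H] [IsOrderedAddMonoid H] [Archimedean H] (hH : SmallQuotients H)
    (heq : Log.ElementarilyEquivalent G H)
    (m n k : ℕ) (hm : 1 ≤ m) (hn : 1 ≤ n) (hk : 1 ≤ k)
    (g : G) (a b : Option G)
    (hinf : {x : G | (∀ a' ∈ a, a' < n • x) ∧ ∀ b' ∈ b, k • x < b'}.Infinite) :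
    {x : G | ((∀ a' ∈ a, a' < n • x) ∧ ∀ b' ∈ b, k • x < b') ∧
      ∃ y : G, x - g = m • y}.Infinite :=
  genInterval_inter_coset_infinite_general G H hH heq m n k hm g a b hinf
end

section
/- Having small quotients is an elementary property of abelian groups: if G₁ and G₂ are abelian groups that are elementarily equivalent as L_grp-structures and G₁ has small quotients, then G₂ has small quotients. -/
open FirstOrder Set

open FirstOrder.Language

/-- addition term -/
def addT {α : Type} (t u : Lgrp.Term α) : Lgrp.Term α :=
  Term.func (grpFunc.add : Lgrp.Functions 2) ![t, u]

def zeroT {α : Type} : Lgrp.Term α :=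
  Term.func (grpFunc.zero : Lgrp.Functions 0) ![]

def smulT {α : Type} : ℕ → Lgrp.Term α → Lgrp.Term α
  | 0, _ => zeroT
  | n + 1, t => addT t (smulT n t)

section Realize
variable {G : Type*} [AddCommGroup G] {α : Type} (v : α → G)

lemma realize_addT (t u : Lgrp.Term α) :
    (addT t u).realize v = t.realize v + u.realize v := rfl

lemma realize_zeroT : (zeroT (α := α)).realize v = (0 : G) := rfl

lemma realize_smulT (n : ℕ) (t : Lgrp.Term α) :
    (smulT n t).realize v = n • t.realize v := by
  induction n with
  | zero => simp [smulT, realize_zeroT]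
  | succ n ih =>
    rw [smulT, realize_addT, ih, succ_nsmul']

end Realize

/-- big disjunction -/
def bigOr : ∀ {k m : ℕ}, (Fin k → Lgrp.BoundedFormula Empty m) → Lgrp.BoundedFormula Empty m
  | 0, _, _ => ⊥
  | _ + 1, _, f => f 0 ⊔ bigOr fun i => f i.succ

lemma realize_bigOr {G : Type*} [AddCommGroup G] {k m : ℕ}
    (f : Fin k → Lgrp.BoundedFormula Empty m) (v : Empty → G) (xs : Fin m → G) :
    (bigOr f).Realize v xs ↔ ∃ i, (f i).Realize v xs := by
  induction k with
  | zero => simp [bigOr]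
  | succ k ih =>
    rw [bigOr, BoundedFormula.realize_sup, ih]
    exact (Fin.exists_fin_succ (P := fun i => (f i).Realize v xs)).symm

/-- the variable term -/
def vT {m : ℕ} (i : Fin m) : Lgrp.Term (Empty ⊕ Fin m) := Term.var (Sum.inr i)

/-- sentence: ∃ x₁ … x_k, ∀ y, ∃ z, ⋁ᵢ y = xᵢ + n·z -/
def phi (n k : ℕ) : Lgrp.Sentence :=
  (BoundedFormula.all
    ((bigOr fun i : Fin k =>
        Term.bdEqual (vT (⟨k, by omega⟩ : Fin (k + 2)))
          (addT (vT ⟨i, by omega⟩) (smulT n (vT ⟨k + 1, by omega⟩)))).ex)).exs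

lemma realize_phi {G : Type*} [AddCommGroup G] (n k : ℕ) :
    (phi n k).Realize G ↔
      ∃ x : Fin k → G, ∀ y : G, ∃ z : G, ∃ i : Fin k, y = x i + n • z := by
  rw [phi, Sentence.Realize]
  rw [BoundedFormula.realize_exs]
  refine exists_congr fun x => ?_
  rw [BoundedFormula.realize_all]
  refine forall_congr' fun y => ?_
  rw [BoundedFormula.realize_ex]
  refine exists_congr fun z => ?_
  rw [realize_bigOr]
  refine exists_congr fun i => ?_
  rw [BoundedFormula.realize_bdEqual, realize_addT, realize_smulT]
  simp only [vT, Term.realize_var, Sum.elim_inr]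
  simp [Fin.snoc, i.isLt.trans (Nat.lt_succ_self k)]

lemma mem_nRange {G : Type*} [AddCommGroup G] {n : ℕ} (a : G) :
    a ∈ AddMonoidHom.range (n • AddMonoidHom.id G) ↔ ∃ z, n • z = a := by
  simp [AddMonoidHom.mem_range]

/-- Having small quotients is an elementary property of abelian groups: if
`G₁ ≡ G₂` as `L_grp`-structures and `G₁` has small quotients, then so does `G₂`. -/
theorem smallQuotients_elementary (G₁ : Type*) [AddCommGroup G₁]
    (G₂ : Type*) [AddCommGroup G₂]
    (heq : Lgrp.ElementarilyEquivalent G₁ G₂)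
    (h₁ : SmallQuotients G₁) : SmallQuotients G₂ := by
  intro n hn
  haveI := h₁ n hn
  haveI : Fintype (G₁ ⧸ AddMonoidHom.range (n • AddMonoidHom.id G₁)) :=
    AddSubgroup.fintypeQuotientOfFiniteIndex
  set k := Fintype.card (G₁ ⧸ AddMonoidHom.range (n • AddMonoidHom.id G₁)) with hk
  obtain ⟨e⟩ : Nonempty ((G₁ ⧸ AddMonoidHom.range (n • AddMonoidHom.id G₁)) ≃ Fin k) :=
    ⟨Fintype.equivFin _⟩
  have h1 : (phi n k).Realize G₁ := by
    rw [realize_phi]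
    refine ⟨fun i => (e.symm i).out, fun y => ?_⟩
    set i := e (QuotientAddGroup.mk y) with hi
    have : QuotientAddGroup.mk (s := AddMonoidHom.range (n • AddMonoidHom.id G₁))
        ((e.symm i).out) = QuotientAddGroup.mk y := by
      rw [QuotientAddGroup.out_eq', hi, Equiv.symm_apply_apply]
    rw [QuotientAddGroup.eq, mem_nRange] at this
    obtain ⟨z, hz⟩ := this
    exact ⟨z, i, by rw [hz]; abel⟩
  have h2 := (heq.realize_sentence (phi n k)).mp h1
  rw [realize_phi] at h2
  obtain ⟨x, hx⟩ := h2
  have : Finite (G₂ ⧸ AddMonoidHom.range (n • AddMonoidHom.id G₂)) := by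
    have hsurj : Function.Surjective
        (fun i : Fin k => (QuotientAddGroup.mk (x i) :
          G₂ ⧸ AddMonoidHom.range (n • AddMonoidHom.id G₂))) := by
      intro q
      obtain ⟨y, rfl⟩ := QuotientAddGroup.mk_surjective q
      obtain ⟨z, i, hyz⟩ := hx y
      refine ⟨i, ?_⟩
      rw [QuotientAddGroup.eq, mem_nRange]
      exact ⟨z, by rw [hyz]; abel⟩
    exact Finite.of_surjective _ hsurj
  exact AddSubgroup.finiteIndex_of_finite_quotient
end
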